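/- Suppose |X_{13}| = 2ℓ−3 (so |X_{11}| = |X_{12}| = 2ℓ−3) under the standing hypotheses. Then |X_2| = |X_{24}| + |X_{25}| − |X_{24} ∩ X_{25}| and |X_{24} ∩ X_{25}| ≤ 1. -/

import Mathlib

set_option linter.unusedSectionVars false



/-- `F` is contained in `G` as a subgraph: an injective graph homomorphism exists. -/
def Contains {α : Type} {β : Type} (F : SimpleGraph α) (G : SimpleGraph β) : Prop :=
  ∃ f : α → β, Function.Injective f ∧ ∀ a b, F.Adj a b → G.Adj (f a) (f b)

/-- The fan graph `F_ℓ`: the join of `K_1` (the vertex `none`) and `ℓ K_2`. -/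
def fan (ℓ : ℕ) : SimpleGraph (Option (Fin ℓ × Fin 2)) :=
  SimpleGraph.fromRel (fun x y =>
    x = none ∨ y = none ∨ ∃ i a b, x = some (i, a) ∧ y = some (i, b))

/-- The matching `ℓ K_2`: `ℓ` disjoint edges. -/
def matchingGraph (ℓ : ℕ) : SimpleGraph (Fin ℓ × Fin 2) :=
  SimpleGraph.fromRel (fun x y => x.1 = y.1)

/-- Vertices outside `U = range u` having exactly `s` neighbours in `U`. -/
def XS {V : Type} [Fintype V] [DecidableEq V] (G : SimpleGraph V) [DecidableRel G.Adj]
    (u : Fin 5 → V) (s : ℕ) : Finset V :=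
  Finset.univ.filter fun v =>
    (∀ j, v ≠ u j) ∧ (Finset.univ.filter fun j => G.Adj v (u j)).card = s

/-- Vertices outside `U` with exactly `s` neighbours in `U`, one of which is `u i`. -/
def XSi {V : Type} [Fintype V] [DecidableEq V] (G : SimpleGraph V) [DecidableRel G.Adj]
    (u : Fin 5 → V) (s : ℕ) (i : Fin 5) : Finset V :=
  (XS G u s).filter fun v => G.Adj v (u i)


open Finset

namespace FanAux

variable {V : Type} [Fintype V] [DecidableEq V]

def Dist (p q : V × V) : Prop := p.1 ≠ q.1 ∧ p.1 ≠ q.2 ∧ p.2 ≠ q.1 ∧ p.2 ≠ q.2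

lemma exists_pairList (n : ℕ) :
    ∀ S : Finset V, S.card ≤ n →
      ∃ L : List (V × V), L.length = S.card / 2 ∧
        (∀ p ∈ L, p.1 ∈ S ∧ p.2 ∈ S ∧ p.1 ≠ p.2) ∧ L.Pairwise Dist := by
  induction n with
  | zero =>
      intro S hS
      have h0 : S.card / 2 = 0 := by omega
      exact ⟨[], by simp [h0], by simp, List.Pairwise.nil⟩
  | succ n ih =>
      intro S hS
      by_cases h1 : S.card ≤ 1
      · have h0 : S.card / 2 = 0 := by omega
        exact ⟨[], by simp [h0], by simp, List.Pairwise.nil⟩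
      · push_neg at h1
        obtain ⟨a, ha⟩ : S.Nonempty := card_pos.mp (by omega)
        obtain ⟨b, hb⟩ : (S.erase a).Nonempty := card_pos.mp (by rw [card_erase_of_mem ha]; omega)
        have hbS : b ∈ S := mem_of_mem_erase hb
        have hba : b ≠ a := ne_of_mem_erase hb
        have hTcard : ((S.erase a).erase b).card = S.card - 2 := by
          rw [card_erase_of_mem hb, card_erase_of_mem ha]; omega
        obtain ⟨L, hlen, hmem, hpw⟩ := ih ((S.erase a).erase b) (by omega)
        refine ⟨(a, b) :: L, ?_, ?_, ?_⟩
        · simp only [List.length_cons, hlen, hTcard]; omega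
        · intro p hp
          rcases List.mem_cons.mp hp with rfl | hp
          · exact ⟨ha, hbS, fun h => hba h.symm⟩
          · obtain ⟨h1', h2', h3'⟩ := hmem p hp
            exact ⟨mem_of_mem_erase (mem_of_mem_erase h1'),
              mem_of_mem_erase (mem_of_mem_erase h2'), h3'⟩
        · refine List.pairwise_cons.mpr ⟨?_, hpw⟩
          intro q hq
          obtain ⟨h1', h2', _⟩ := hmem q hq
          refine ⟨?_, ?_, ?_, ?_⟩
          · exact fun e => (ne_of_mem_erase (mem_of_mem_erase h1')) e.symm
          · exact fun e => (ne_of_mem_erase (mem_of_mem_erase h2')) e.symm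
          · exact fun e => (ne_of_mem_erase h1') e.symm
          · exact fun e => (ne_of_mem_erase h2') e.symm

lemma fan_some_some {ℓ : ℕ} {i j : Fin ℓ} {a b : Fin 2}
    (h : (fan ℓ).Adj (some (i, a)) (some (j, b))) : i = j ∧ a ≠ b := by
  rw [fan, SimpleGraph.fromRel_adj] at h
  obtain ⟨hne, hr | hr⟩ := h
  · rcases hr with h' | h' | ⟨i0, a0, b0, h1, h2⟩
    · exact absurd h' (by simp)
    · exact absurd h' (by simp)
    · simp only [Option.some.injEq, Prod.mk.injEq] at h1 h2
      have hij : i = j := h1.1.trans h2.1.symm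
      exact ⟨hij, fun e => hne (by rw [hij, e])⟩
  · rcases hr with h' | h' | ⟨i0, a0, b0, h1, h2⟩
    · exact absurd h' (by simp)
    · exact absurd h' (by simp)
    · simp only [Option.some.injEq, Prod.mk.injEq] at h1 h2
      have hij : i = j := h2.1.trans h1.1.symm
      exact ⟨hij, fun e => hne (by rw [hij, e])⟩

lemma contains_fan_of_list {ℓ : ℕ} {G : SimpleGraph V} {c : V} {L : List (V × V)}
    (hadjc : ∀ p ∈ L, G.Adj c p.1 ∧ G.Adj c p.2)
    (hadj : ∀ p ∈ L, G.Adj p.1 p.2)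
    (hpw : L.Pairwise Dist)
    (hlen : ℓ ≤ L.length) : Contains (fan ℓ) G := by
  have hget : ∀ i : Fin ℓ, (i : ℕ) < L.length := fun i => lt_of_lt_of_le i.2 hlen
  set P : Fin ℓ → V × V := fun i => L.get ⟨i, hget i⟩ with hP
  have hPmem : ∀ i, P i ∈ L := fun i => L.get_mem _
  have hDist : ∀ i j : Fin ℓ, i ≠ j → Dist (P i) (P j) := by
    intro i j hij
    rcases Nat.lt_or_ge i.1 j.1 with h | h
    · exact List.pairwise_iff_get.mp hpw ⟨i, hget i⟩ ⟨j, hget j⟩ h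
    · have hj : (j : ℕ) < (i : ℕ) := lt_of_le_of_ne h (fun e => hij (Fin.ext e.symm))
      obtain ⟨d1, d2, d3, d4⟩ := List.pairwise_iff_get.mp hpw ⟨j, hget j⟩ ⟨i, hget i⟩ hj
      exact ⟨d1.symm, d3.symm, d2.symm, d4.symm⟩
  have two : ∀ b : Fin 2, b = 0 ∨ b = 1 := by decide
  refine ⟨fun x => Option.elim x c (fun q => if q.2 = 0 then (P q.1).1 else (P q.1).2), ?_, ?_⟩
  · intro x y hxy
    match x, y with
    | none, none => rfl
    | none, some q =>
        exfalso
        rcases two q.2 with h | h <;> simp [h, Option.elim] at hxy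
        · exact (hadjc _ (hPmem q.1)).1.ne hxy
        · exact (hadjc _ (hPmem q.1)).2.ne hxy
    | some q, none =>
        exfalso
        rcases two q.2 with h | h <;> simp [h, Option.elim] at hxy
        · exact (hadjc _ (hPmem q.1)).1.ne hxy.symm
        · exact (hadjc _ (hPmem q.1)).2.ne hxy.symm
    | some p, some q =>
        simp only [Option.elim] at hxy
        by_cases hpq : p.1 = q.1
        · have h2 : p.2 = q.2 := by
            by_contra hne
            have hne' := (hadj _ (hPmem p.1)).ne
            rcases two p.2 with h | h <;> rcases two q.2 with h' | h' <;>
              simp [h, h', ← hpq] at hxy hne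
            · exact hne' hxy
            · exact hne' hxy.symm
          have : p = q := Prod.ext hpq h2
          rw [this]
        · exfalso
          obtain ⟨d1, d2, d3, d4⟩ := hDist p.1 q.1 hpq
          rcases two p.2 with h | h <;> rcases two q.2 with h' | h' <;>
            simp [h, h'] at hxy
          · exact d1 hxy
          · exact d2 hxy
          · exact d3 hxy
          · exact d4 hxy
  · intro a b hab
    match a, b with
    | none, none => exact absurd rfl hab.ne
    | none, some q =>
        rcases two q.2 with h | h <;> simp [h, Option.elim]
        · exact (hadjc _ (hPmem q.1)).1
        · exact (hadjc _ (hPmem q.1)).2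
    | some q, none =>
        rcases two q.2 with h | h <;> simp [h, Option.elim]
        · exact (hadjc _ (hPmem q.1)).1.symm
        · exact (hadjc _ (hPmem q.1)).2.symm
    | some p, some q =>
        obtain ⟨hij, hab'⟩ := fan_some_some (i := p.1) (j := q.1) (a := p.2) (b := q.2)
          (by simpa using hab)
        simp only [Option.elim]
        rcases two p.2 with h | h <;> rcases two q.2 with h' | h' <;>
          simp [h, h', hij]
        · exact absurd (h.trans h'.symm) hab'
        · exact (hadj _ (hPmem q.1))
        · exact (hadj _ (hPmem q.1)).symm
        · exact absurd (h.trans h'.symm) hab'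

end FanAux

-- continuation fragment (will be merged); uses defs from a.lean
section B
variable {V : Type} [Fintype V] [DecidableEq V]
open FanAux

namespace FanAux

lemma cross_dist {S T : Finset V} (hd : Disjoint S T) {p q : V × V}
    (hp : p.1 ∈ S ∧ p.2 ∈ S) (hq : q.1 ∈ T ∧ q.2 ∈ T) : Dist p q := by
  have h := Finset.disjoint_left.mp hd
  exact ⟨fun e => h hp.1 (e ▸ hq.1), fun e => h hp.1 (e ▸ hq.2),
    fun e => h hp.2 (e ▸ hq.1), fun e => h hp.2 (e ▸ hq.2)⟩

lemma fan_three (ℓ : ℕ) (G : SimpleGraph V) [DecidableRel G.Adj] (c : V)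
    (S1 S2 S3 : Finset V)
    (hc1 : G.IsClique (↑S1 : Set V)) (hc2 : G.IsClique (↑S2 : Set V))
    (hc3 : G.IsClique (↑S3 : Set V))
    (hn1 : S1 ⊆ G.neighborFinset c) (hn2 : S2 ⊆ G.neighborFinset c)
    (hn3 : S3 ⊆ G.neighborFinset c)
    (d12 : Disjoint S1 S2) (d13 : Disjoint S1 S3) (d23 : Disjoint S2 S3)
    (hsum : ℓ ≤ S1.card / 2 + S2.card / 2 + S3.card / 2) :
    Contains (fan ℓ) G := by
  obtain ⟨L1, len1, mem1, pw1⟩ := exists_pairList S1.card S1 le_rfl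
  obtain ⟨L2, len2, mem2, pw2⟩ := exists_pairList S2.card S2 le_rfl
  obtain ⟨L3, len3, mem3, pw3⟩ := exists_pairList S3.card S3 le_rfl
  have hmm : ∀ (L : List (V × V)) (S : Finset V), (∀ p ∈ L, p.1 ∈ S ∧ p.2 ∈ S ∧ p.1 ≠ p.2) →
      G.IsClique (↑S : Set V) → S ⊆ G.neighborFinset c →
      (∀ p ∈ L, G.Adj c p.1 ∧ G.Adj c p.2) ∧ (∀ p ∈ L, G.Adj p.1 p.2) := by
    intro L S hmem hcl hsub
    constructor
    · intro p hp
      obtain ⟨h1, h2, _⟩ := hmem p hp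
      exact ⟨(G.mem_neighborFinset c p.1).mp (hsub h1), (G.mem_neighborFinset c p.2).mp (hsub h2)⟩
    · intro p hp
      obtain ⟨h1, h2, h3⟩ := hmem p hp
      exact hcl (by exact_mod_cast h1) (by exact_mod_cast h2) h3
  obtain ⟨c1, a1⟩ := hmm L1 S1 mem1 hc1 hn1
  obtain ⟨c2, a2⟩ := hmm L2 S2 mem2 hc2 hn2
  obtain ⟨c3, a3⟩ := hmm L3 S3 mem3 hc3 hn3
  have pw12 : (L1 ++ L2).Pairwise Dist := by
    rw [List.pairwise_append]
    exact ⟨pw1, pw2, fun p hp q hq => cross_dist d12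
      ⟨(mem1 p hp).1, (mem1 p hp).2.1⟩ ⟨(mem2 q hq).1, (mem2 q hq).2.1⟩⟩
  have pw : (L1 ++ L2 ++ L3).Pairwise Dist := by
    rw [List.pairwise_append]
    refine ⟨pw12, pw3, ?_⟩
    intro p hp q hq
    rcases List.mem_append.mp hp with hp | hp
    · exact cross_dist d13 ⟨(mem1 p hp).1, (mem1 p hp).2.1⟩ ⟨(mem3 q hq).1, (mem3 q hq).2.1⟩
    · exact cross_dist d23 ⟨(mem2 p hp).1, (mem2 p hp).2.1⟩ ⟨(mem3 q hq).1, (mem3 q hq).2.1⟩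
  apply contains_fan_of_list (c := c) (L := L1 ++ L2 ++ L3)
  · intro p hp
    rcases List.mem_append.mp hp with hp | hp
    · rcases List.mem_append.mp hp with hp | hp
      · exact c1 p hp
      · exact c2 p hp
    · exact c3 p hp
  · intro p hp
    rcases List.mem_append.mp hp with hp | hp
    · rcases List.mem_append.mp hp with hp | hp
      · exact a1 p hp
      · exact a2 p hp
    · exact a3 p hp
  · exact pw
  · simp only [List.length_append, len1, len2, len3]; omega

end FanAux
end B

section C
open Finset
namespace FanAux
variable {V : Type} [Fintype V] [DecidableEq V] {G : SimpleGraph V} [DecidableRel G.Adj]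
  {u : Fin 5 → V}

lemma mem_XS_iff {v : V} {s : ℕ} :
    v ∈ XS G u s ↔ (∀ j, v ≠ u j) ∧ (univ.filter fun j => G.Adj v (u j)).card = s := by
  simp [XS]

lemma XS_ne_u {v : V} {s : ℕ} (h : v ∈ XS G u s) (j : Fin 5) : v ≠ u j :=
  (mem_XS_iff.mp h).1 j

lemma XS_card_filter {v : V} {s : ℕ} (h : v ∈ XS G u s) :
    (univ.filter fun j => G.Adj v (u j)).card = s := (mem_XS_iff.mp h).2

lemma u_not_XS {s : ℕ} (j : Fin 5) : u j ∉ XS G u s := fun h => XS_ne_u h j rfl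

lemma mem_XSi_iff {v : V} {s : ℕ} {i : Fin 5} :
    v ∈ XSi G u s i ↔ v ∈ XS G u s ∧ G.Adj v (u i) := by
  simp [XSi]

lemma XSi_subset {s : ℕ} {i : Fin 5} : XSi G u s i ⊆ XS G u s := filter_subset _ _

lemma XS_disj {s t : ℕ} (hst : s ≠ t) : Disjoint (XS G u s) (XS G u t) := by
  rw [Finset.disjoint_left]
  intro v hv hv'
  exact hst ((XS_card_filter hv).symm.trans (XS_card_filter hv'))

lemma XS_ne {v w : V} {s t : ℕ} (hv : v ∈ XS G u s) (hw : w ∈ XS G u t) (hst : s ≠ t) :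
    v ≠ w := fun e => Finset.disjoint_left.mp (XS_disj hst) hv (e ▸ hw)

lemma X1_adj_iff {v : V} {i : Fin 5} (h : v ∈ XSi G u 1 i) :
    ∀ j, G.Adj v (u j) → j = i := by
  obtain ⟨hv, hadj⟩ := mem_XSi_iff.mp h
  obtain ⟨a, ha⟩ := Finset.card_eq_one.mp (XS_card_filter hv)
  have hi : i ∈ univ.filter fun j => G.Adj v (u j) := mem_filter.mpr ⟨mem_univ _, hadj⟩
  rw [ha, mem_singleton] at hi
  intro j hj
  have : j ∈ univ.filter fun j => G.Adj v (u j) := mem_filter.mpr ⟨mem_univ _, hj⟩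
  rw [ha, mem_singleton] at this
  exact this.trans hi.symm

lemma X1_not_adj {v : V} {i j : Fin 5} (h : v ∈ XSi G u 1 i) (hj : j ≠ i) :
    ¬ G.Adj v (u j) := fun ha => hj (X1_adj_iff h j ha)

lemma XSi1_disj {i j : Fin 5} (hij : i ≠ j) : Disjoint (XSi G u 1 i) (XSi G u 1 j) := by
  rw [Finset.disjoint_left]
  intro v hv hv'
  exact X1_not_adj hv (Ne.symm hij) (mem_XSi_iff.mp hv').2

lemma XSi1_ne {α β : V} {i j : Fin 5} (hα : α ∈ XSi G u 1 i) (hβ : β ∈ XSi G u 1 j)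
    (hij : i ≠ j) : α ≠ β := fun e => Finset.disjoint_left.mp (XSi1_disj hij) hα (e ▸ hβ)

lemma X2_pair {v : V} (h : v ∈ XS G u 2) :
    ∃ i j : Fin 5, i ≠ j ∧ G.Adj v (u i) ∧ G.Adj v (u j) ∧
      (∀ k, G.Adj v (u k) → k = i ∨ k = j) := by
  obtain ⟨i, j, hij, hs⟩ := Finset.card_eq_two.mp (XS_card_filter h)
  refine ⟨i, j, hij, ?_, ?_, ?_⟩
  · have : i ∈ univ.filter fun k => G.Adj v (u k) := by rw [hs]; simp
    exact (mem_filter.mp this).2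
  · have : j ∈ univ.filter fun k => G.Adj v (u k) := by rw [hs]; simp
    exact (mem_filter.mp this).2
  · intro k hk
    have : k ∈ univ.filter fun k => G.Adj v (u k) := mem_filter.mpr ⟨mem_univ _, hk⟩
    rw [hs, mem_insert, mem_singleton] at this
    exact this

lemma filter_sub_012 {v : V} (h3 : ¬ G.Adj v (u 3)) (h4 : ¬ G.Adj v (u 4)) :
    (univ.filter fun j => G.Adj v (u j)) ⊆ ({0, 1, 2} : Finset (Fin 5)) := by
  intro k hk
  have hadj := (mem_filter.mp hk).2
  have k3 : k ≠ 3 := fun e => h3 (e ▸ hadj)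
  have k4 : k ≠ 4 := fun e => h4 (e ▸ hadj)
  have : ∀ m : Fin 5, m ≠ 3 → m ≠ 4 → m ∈ ({0, 1, 2} : Finset (Fin 5)) := by decide
  exact this k k3 k4

lemma X3_all {v : V} (h : v ∈ XS G u 3) (h3 : ¬ G.Adj v (u 3)) (h4 : ¬ G.Adj v (u 4)) :
    ∀ m : Fin 5, m ≤ 2 → G.Adj v (u m) := by
  have hsub := filter_sub_012 (G := G) (u := u) (v := v) h3 h4
  have heq : (univ.filter fun j => G.Adj v (u j)) = ({0, 1, 2} : Finset (Fin 5)) :=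
    Finset.eq_of_subset_of_card_le hsub (by rw [XS_card_filter h]; decide)
  intro m hm
  have : m ∈ ({0, 1, 2} : Finset (Fin 5)) := by
    revert hm; revert m; decide
  rw [← heq] at this
  exact (mem_filter.mp this).2

lemma X45_adj {v : V} {s : ℕ} (hs : 4 ≤ s) (h : v ∈ XS G u s) :
    G.Adj v (u 3) ∨ G.Adj v (u 4) := by
  by_contra hc
  push_neg at hc
  have hsub := filter_sub_012 (G := G) (u := u) (v := v) hc.1 hc.2
  have := Finset.card_le_card hsub
  rw [XS_card_filter h] at this
  have h3 : ({0, 1, 2} : Finset (Fin 5)).card = 3 := by decide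
  omega

lemma no_six (h6 : ∀ s : Finset V, (↑s : Set V).Pairwise (fun a b => ¬ G.Adj a b) → s.card ≤ 5)
    (a b c d e f : V)
    (hab : a ≠ b) (hac : a ≠ c) (had : a ≠ d) (hae : a ≠ e) (haf : a ≠ f)
    (hbc : b ≠ c) (hbd : b ≠ d) (hbe : b ≠ e) (hbf : b ≠ f)
    (hcd : c ≠ d) (hce : c ≠ e) (hcf : c ≠ f)
    (hde : d ≠ e) (hdf : d ≠ f) (hef : e ≠ f)
    (nab : ¬ G.Adj a b) (nac : ¬ G.Adj a c) (nad : ¬ G.Adj a d) (nae : ¬ G.Adj a e)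
    (naf : ¬ G.Adj a f)
    (nbc : ¬ G.Adj b c) (nbd : ¬ G.Adj b d) (nbe : ¬ G.Adj b e) (nbf : ¬ G.Adj b f)
    (ncd : ¬ G.Adj c d) (nce : ¬ G.Adj c e) (ncf : ¬ G.Adj c f)
    (nde : ¬ G.Adj d e) (ndf : ¬ G.Adj d f) (nef : ¬ G.Adj e f) : False := by
  have nba : ¬ G.Adj b a := fun h => nab h.symm
  have nca : ¬ G.Adj c a := fun h => nac h.symm
  have nda : ¬ G.Adj d a := fun h => nad h.symm
  have nea : ¬ G.Adj e a := fun h => nae h.symm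
  have nfa : ¬ G.Adj f a := fun h => naf h.symm
  have ncb : ¬ G.Adj c b := fun h => nbc h.symm
  have ndb : ¬ G.Adj d b := fun h => nbd h.symm
  have neb : ¬ G.Adj e b := fun h => nbe h.symm
  have nfb : ¬ G.Adj f b := fun h => nbf h.symm
  have ndc : ¬ G.Adj d c := fun h => ncd h.symm
  have nec : ¬ G.Adj e c := fun h => nce h.symm
  have nfc : ¬ G.Adj f c := fun h => ncf h.symm
  have ned : ¬ G.Adj e d := fun h => nde h.symm
  have nfd : ¬ G.Adj f d := fun h => ndf h.symm
  have nfe : ¬ G.Adj f e := fun h => nef h.symm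
  have hcard : ({a, b, c, d, e, f} : Finset V).card = 6 := by
    rw [card_insert_of_notMem (by simp [hab, hac, had, hae, haf]),
      card_insert_of_notMem (by simp [hbc, hbd, hbe, hbf]),
      card_insert_of_notMem (by simp [hcd, hce, hcf]),
      card_insert_of_notMem (by simp [hde, hdf]),
      card_insert_of_notMem (by simp [hef]), card_singleton]
  have hp : (↑({a, b, c, d, e, f} : Finset V) : Set V).Pairwise (fun x y => ¬ G.Adj x y) := by
    intro x hx y hy hxy
    simp only [coe_insert, Set.mem_insert_iff, coe_singleton, Set.mem_singleton_iff] at hx hy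
    rcases hx with rfl | rfl | rfl | rfl | rfl | rfl <;>
      rcases hy with rfl | rfl | rfl | rfl | rfl | rfl <;>
      first
      | exact absurd rfl hxy
      | assumption
  have := h6 _ hp
  rw [hcard] at this
  omega

end FanAux
end C

section D
open Finset
namespace FanAux
variable {V : Type} [Fintype V] [DecidableEq V] {G : SimpleGraph V} [DecidableRel G.Adj]
  {u : Fin 5 → V} {ℓ : ℕ}

lemma A_nonempty (hℓ : 6 ≤ ℓ)
    (hω : ∀ s : Finset V, G.IsClique (↑s : Set V) → s.card ≤ 2 * ℓ - 2)
    {m : Fin 5} (hcliqm : G.IsClique (↑(insert (u m) (XSi G u 1 m)) : Set V))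
    (hbigm : (XSi G u 1 m).card = 2 * ℓ - 3)
    {v : V} (hvu : ∀ j, v ≠ u j) (hvm : G.Adj v (u m)) (hv1 : v ∉ XSi G u 1 m) :
    (XSi G u 1 m \ G.neighborFinset v).Nonempty := by
  rw [Finset.nonempty_iff_ne_empty]
  intro h
  have hsub : XSi G u 1 m ⊆ G.neighborFinset v := Finset.sdiff_eq_empty_iff_subset.mp h
  have hclique : G.IsClique (↑(insert v (insert (u m) (XSi G u 1 m))) : Set V) := by
    rw [coe_insert]
    refine hcliqm.insert ?_
    intro b hb hbv
    rw [Finset.mem_coe, mem_insert] at hb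
    rcases hb with rfl | hb
    · exact hvm
    · exact (G.mem_neighborFinset v b).mp (hsub hb)
  have hvnot : v ∉ insert (u m) (XSi G u 1 m) := by
    rw [mem_insert]
    rintro (h' | h')
    · exact hvu m h'
    · exact hv1 h'
  have humnot : u m ∉ XSi G u 1 m := fun h' => u_not_XS m (XSi_subset h')
  have hcard := hω _ hclique
  rw [card_insert_of_notMem hvnot, card_insert_of_notMem humnot, hbigm] at hcard
  omega

lemma small_of_complete (hℓ : 6 ≤ ℓ) (hF : ¬ Contains (fan ℓ) G)
    {i j : Fin 5} (hij : i ≠ j)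
    (hcliqi : G.IsClique (↑(insert (u i) (XSi G u 1 i)) : Set V))
    (hcliqj : G.IsClique (↑(insert (u j) (XSi G u 1 j)) : Set V))
    (hbigi : (XSi G u 1 i).card = 2 * ℓ - 3)
    {α : V} (hα : α ∈ XSi G u 1 i)
    {W : Finset V} (hW : W ⊆ XSi G u 1 j) (hadj : ∀ β ∈ W, G.Adj α β) :
    W.card ≤ 3 := by
  by_contra hc
  push_neg at hc
  obtain ⟨W4, hW4sub, hW4card⟩ := Finset.exists_subset_card_eq (s := W) (n := 4) (by omega)
  apply hF
  have hαXS : α ∈ XS G u 1 := XSi_subset hα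
  have humnot : u i ∉ (XSi G u 1 i).erase α := fun h' => u_not_XS i (XSi_subset (mem_of_mem_erase h'))
  refine fan_three ℓ G α (insert (u i) ((XSi G u 1 i).erase α)) W4 ∅ ?_ ?_ ?_ ?_ ?_ ?_ ?_ ?_ ?_ ?_
  · exact hcliqi.subset (by
      rw [coe_subset]
      exact insert_subset_insert _ (erase_subset _ _))
  · exact hcliqj.subset (by
      rw [coe_subset]
      exact (hW4sub.trans hW).trans (subset_insert _ _))
  · simp
  · intro x hx
    rw [G.mem_neighborFinset]
    rw [mem_insert] at hx
    have hmemα : α ∈ (↑(insert (u i) (XSi G u 1 i)) : Set V) := by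
      rw [coe_insert]; exact Set.mem_insert_of_mem _ hα
    rcases hx with rfl | hx
    · exact hcliqi hmemα (by rw [coe_insert]; exact Set.mem_insert _ _) (XS_ne_u hαXS i)
    · have hmemx : x ∈ (↑(insert (u i) (XSi G u 1 i)) : Set V) := by
        rw [coe_insert]; exact Set.mem_insert_of_mem _ (mem_of_mem_erase hx)
      exact hcliqi hmemα hmemx (fun e => (ne_of_mem_erase hx) e.symm)
  · intro x hx
    rw [G.mem_neighborFinset]
    exact hadj x (hW4sub hx)
  · exact empty_subset _
  · rw [Finset.disjoint_left]
    intro a ha ha'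
    have haj : a ∈ XSi G u 1 j := hW (hW4sub ha')
    rcases mem_insert.mp ha with rfl | ha
    · exact u_not_XS i (XSi_subset haj)
    · exact Finset.disjoint_left.mp (XSi1_disj hij) (mem_of_mem_erase ha) haj
  · exact disjoint_empty_right _
  · exact disjoint_empty_right _
  · have h1 : (insert (u i) ((XSi G u 1 i).erase α)).card = 2 * ℓ - 3 := by
      rw [card_insert_of_notMem humnot, card_erase_of_mem hα, hbigi]
      omega
    rw [h1, hW4card]
    simp
    omega

end FanAux
end D

section E
open Finset
namespace FanAux
variable {V : Type} [Fintype V] [DecidableEq V] {G : SimpleGraph V} [DecidableRel G.Adj]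
  {u : Fin 5 → V} {ℓ : ℕ}

lemma gadget_clique {m : Fin 5} (hcliqm : G.IsClique (↑(insert (u m) (XSi G u 1 m)) : Set V))
    (t : Finset V) :
    G.IsClique (↑(insert (u m) (XSi G u 1 m ∩ t)) : Set V) :=
  hcliqm.subset (by
    rw [coe_subset]
    exact insert_subset_insert _ inter_subset_left)

lemma gadget_sub {m : Fin 5} {v : V} (hvm : G.Adj v (u m)) :
    insert (u m) (XSi G u 1 m ∩ G.neighborFinset v) ⊆ G.neighborFinset v :=
  insert_subset_iff.mpr ⟨(G.mem_neighborFinset v (u m)).mpr hvm, inter_subset_right⟩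

lemma gadget_disj (hu : Function.Injective u) {m m' : Fin 5} (hmm : m ≠ m') (t t' : Finset V) :
    Disjoint (insert (u m) (XSi G u 1 m ∩ t)) (insert (u m') (XSi G u 1 m' ∩ t')) := by
  rw [Finset.disjoint_left]
  intro a ha ha'
  rcases mem_insert.mp ha with rfl | ha
  · rcases mem_insert.mp ha' with h | h
    · exact hmm (hu h)
    · exact u_not_XS m (XSi_subset (mem_inter.mp h).1)
  · rcases mem_insert.mp ha' with h | h
    · exact u_not_XS m' (XSi_subset (mem_inter.mp (h ▸ ha)).1)
    · exact Finset.disjoint_left.mp (XSi1_disj hmm) (mem_inter.mp ha).1 (mem_inter.mp h).1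

lemma gadget_card {m : Fin 5} (t : Finset V) :
    (insert (u m) (XSi G u 1 m ∩ t)).card = 1 + (XSi G u 1 m ∩ t).card := by
  rw [card_insert_of_notMem (fun h => u_not_XS m (XSi_subset (mem_inter.mp h).1))]
  omega

lemma fan_at_center2 (hF : ¬ Contains (fan ℓ) G) (hu : Function.Injective u)
    (hcliq : ∀ m : Fin 5, G.IsClique (↑(insert (u m) (XSi G u 1 m)) : Set V))
    {v : V} {m1 m2 : Fin 5} (h12 : m1 ≠ m2)
    (ha1 : G.Adj v (u m1)) (ha2 : G.Adj v (u m2))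
    (hsum : ℓ ≤ (1 + (XSi G u 1 m1 ∩ G.neighborFinset v).card) / 2
      + (1 + (XSi G u 1 m2 ∩ G.neighborFinset v).card) / 2) : False := by
  apply hF
  refine fan_three ℓ G v _ _ ∅ (gadget_clique (hcliq m1) _) (gadget_clique (hcliq m2) _)
    (by simp) (gadget_sub ha1) (gadget_sub ha2) (empty_subset _)
    (gadget_disj hu h12 _ _) (disjoint_empty_right _) (disjoint_empty_right _) ?_
  rw [gadget_card, gadget_card]
  simpa using hsum

lemma fan_at_center3 (hF : ¬ Contains (fan ℓ) G) (hu : Function.Injective u)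
    (hcliq : ∀ m : Fin 5, G.IsClique (↑(insert (u m) (XSi G u 1 m)) : Set V))
    {v : V} {m1 m2 m3 : Fin 5} (h12 : m1 ≠ m2) (h13 : m1 ≠ m3) (h23 : m2 ≠ m3)
    (ha1 : G.Adj v (u m1)) (ha2 : G.Adj v (u m2)) (ha3 : G.Adj v (u m3))
    (hsum : ℓ ≤ (1 + (XSi G u 1 m1 ∩ G.neighborFinset v).card) / 2
      + (1 + (XSi G u 1 m2 ∩ G.neighborFinset v).card) / 2
      + (1 + (XSi G u 1 m3 ∩ G.neighborFinset v).card) / 2) : False := by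
  apply hF
  refine fan_three ℓ G v _ _ _ (gadget_clique (hcliq m1) _) (gadget_clique (hcliq m2) _)
    (gadget_clique (hcliq m3) _) (gadget_sub ha1) (gadget_sub ha2) (gadget_sub ha3)
    (gadget_disj hu h12 _ _) (gadget_disj hu h13 _ _) (gadget_disj hu h23 _ _) ?_
  rw [gadget_card, gadget_card, gadget_card]
  exact hsum

end FanAux
end E

section F
open Finset
namespace FanAux
variable {V : Type} [Fintype V] [DecidableEq V] {G : SimpleGraph V} [DecidableRel G.Adj]
  {u : Fin 5 → V} {ℓ : ℕ}

lemma fin5_le2 : ∀ m : Fin 5, m ≠ 3 → m ≠ 4 → m ≤ 2 := by decide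
lemma fin5_ne34 : ∀ m : Fin 5, m ≤ 2 → m ≠ 3 ∧ m ≠ 4 := by decide

lemma lemA (hℓ : 6 ≤ ℓ) (hF : ¬ Contains (fan ℓ) G) (hu : Function.Injective u)
    (huI : (Set.range u).Pairwise fun a b => ¬ G.Adj a b)
    (h6 : ∀ s : Finset V, (↑s : Set V).Pairwise (fun a b => ¬ G.Adj a b) → s.card ≤ 5)
    (hω : ∀ s : Finset V, G.IsClique (↑s : Set V) → s.card ≤ 2 * ℓ - 2)
    (hcliq : ∀ m : Fin 5, G.IsClique (↑(insert (u m) (XSi G u 1 m)) : Set V))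
    (hbig : ∀ m : Fin 5, m ≤ 2 → (XSi G u 1 m).card = 2 * ℓ - 3)
    {v : V} (hv : v ∈ XS G u 2) : G.Adj v (u 3) ∨ G.Adj v (u 4) := by
  by_contra hcon
  push_neg at hcon
  obtain ⟨h3, h4⟩ := hcon
  obtain ⟨i, j, hij, hai, haj, hcomp⟩ := X2_pair hv
  have hi2 : i ≤ 2 := fin5_le2 i (fun e => h3 (e ▸ hai)) (fun e => h4 (e ▸ hai))
  have hj2 : j ≤ 2 := fin5_le2 j (fun e => h3 (e ▸ haj)) (fun e => h4 (e ▸ haj))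
  have hex : ∀ a b : Fin 5, a ≤ 2 → b ≤ 2 → a ≠ b → ∃ k, k ≤ 2 ∧ k ≠ a ∧ k ≠ b := by decide
  obtain ⟨k, hk2, hki, hkj⟩ := hex i j hi2 hj2 hij
  have hvu : ∀ m, v ≠ u m := XS_ne_u hv
  have hvnoti : v ∉ XSi G u 1 i := fun h => XS_ne hv (XSi_subset h) (by omega) rfl
  have hvnotj : v ∉ XSi G u 1 j := fun h => XS_ne hv (XSi_subset h) (by omega) rfl
  have hAine := A_nonempty hℓ hω (hcliq i) (hbig i hi2) hvu hai hvnoti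
  have hAjne := A_nonempty hℓ hω (hcliq j) (hbig j hj2) hvu haj hvnotj
  by_cases hcb : ∀ α ∈ XSi G u 1 i \ G.neighborFinset v,
      ∀ β ∈ XSi G u 1 j \ G.neighborFinset v, G.Adj α β
  · -- complete bipartite between the two non-neighbour sets ⇒ fan at v
    obtain ⟨α, hα⟩ := hAine
    obtain ⟨β, hβ⟩ := hAjne
    have hAj3 : (XSi G u 1 j \ G.neighborFinset v).card ≤ 3 :=
      small_of_complete hℓ hF hij (hcliq i) (hcliq j) (hbig i hi2) (mem_sdiff.mp hα).1
        sdiff_subset (fun γ hγ => hcb α hα γ hγ)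
    have hAi3 : (XSi G u 1 i \ G.neighborFinset v).card ≤ 3 :=
      small_of_complete hℓ hF hij.symm (hcliq j) (hcliq i) (hbig j hj2) (mem_sdiff.mp hβ).1
        sdiff_subset (fun γ hγ => (hcb γ hγ β hβ).symm)
    have e1 := Finset.card_sdiff_add_card_inter (XSi G u 1 i) (G.neighborFinset v)
    have e2 := Finset.card_sdiff_add_card_inter (XSi G u 1 j) (G.neighborFinset v)
    rw [hbig i hi2] at e1
    rw [hbig j hj2] at e2
    exact fan_at_center2 hF hu hcliq hij hai haj (by omega)
  · push_neg at hcb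
    obtain ⟨α, hα, β, hβ, hnadj⟩ := hcb
    obtain ⟨hαX, hαN⟩ := mem_sdiff.mp hα
    obtain ⟨hβX, hβN⟩ := mem_sdiff.mp hβ
    have hi3 := fin5_ne34 i hi2
    have hj3 := fin5_ne34 j hj2
    have hk3 := fin5_ne34 k hk2
    exact no_six h6 v α β (u k) (u 3) (u 4)
      (XS_ne hv (XSi_subset hαX) (by omega))
      (XS_ne hv (XSi_subset hβX) (by omega))
      (hvu k) (hvu 3) (hvu 4)
      (XSi1_ne hαX hβX hij)
      (XS_ne_u (XSi_subset hαX) k) (XS_ne_u (XSi_subset hαX) 3) (XS_ne_u (XSi_subset hαX) 4)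
      (XS_ne_u (XSi_subset hβX) k) (XS_ne_u (XSi_subset hβX) 3) (XS_ne_u (XSi_subset hβX) 4)
      (fun e => hk3.1 (hu e)) (fun e => hk3.2 (hu e))
      (fun e => (by decide : (3 : Fin 5) ≠ 4) (hu e))
      (fun h => hαN ((G.mem_neighborFinset v α).mpr h))
      (fun h => hβN ((G.mem_neighborFinset v β).mpr h))
      (fun h => (hcomp k h).elim hki hkj)
      h3 h4 hnadj
      (X1_not_adj hαX hki)
      (X1_not_adj hαX (Ne.symm hi3.1)) (X1_not_adj hαX (Ne.symm hi3.2))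
      (X1_not_adj hβX hkj)
      (X1_not_adj hβX (Ne.symm hj3.1)) (X1_not_adj hβX (Ne.symm hj3.2))
      (huI (Set.mem_range_self k) (Set.mem_range_self 3) (fun e => hk3.1 (hu e)))
      (huI (Set.mem_range_self k) (Set.mem_range_self 4) (fun e => hk3.2 (hu e)))
      (huI (Set.mem_range_self 3) (Set.mem_range_self 4)
        (fun e => (by decide : (3 : Fin 5) ≠ 4) (hu e)))

end FanAux
end F

section G
open Finset
namespace FanAux
variable {V : Type} [Fintype V] [DecidableEq V] {G : SimpleGraph V} [DecidableRel G.Adj]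
  {u : Fin 5 → V} {ℓ : ℕ}

lemma lemA3 (hℓ : 6 ≤ ℓ) (hF : ¬ Contains (fan ℓ) G) (hu : Function.Injective u)
    (huI : (Set.range u).Pairwise fun a b => ¬ G.Adj a b)
    (h6 : ∀ s : Finset V, (↑s : Set V).Pairwise (fun a b => ¬ G.Adj a b) → s.card ≤ 5)
    (hω : ∀ s : Finset V, G.IsClique (↑s : Set V) → s.card ≤ 2 * ℓ - 2)
    (hcliq : ∀ m : Fin 5, G.IsClique (↑(insert (u m) (XSi G u 1 m)) : Set V))
    (hbig : ∀ m : Fin 5, m ≤ 2 → (XSi G u 1 m).card = 2 * ℓ - 3)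
    {z : V} (hz : z ∈ XS G u 3) : G.Adj z (u 3) ∨ G.Adj z (u 4) := by
  by_contra hcon
  push_neg at hcon
  obtain ⟨h3, h4⟩ := hcon
  have hall := X3_all hz h3 h4
  have hvu := XS_ne_u hz
  have hznot : ∀ m : Fin 5, z ∉ XSi G u 1 m :=
    fun m h => XS_ne hz (XSi_subset h) (by omega) rfl
  have hAne : ∀ m : Fin 5, m ≤ 2 → (XSi G u 1 m \ G.neighborFinset z).Nonempty :=
    fun m hm => A_nonempty hℓ hω (hcliq m) (hbig m hm) hvu (hall m hm) (hznot m)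
  have hPcase : ∀ p q : Fin 5, p ≤ 2 → q ≤ 2 → p ≠ q →
      (∀ α ∈ XSi G u 1 p \ G.neighborFinset z,
        ∀ β ∈ XSi G u 1 q \ G.neighborFinset z, G.Adj α β) → False := by
    intro p q hp hq hpq hcb
    obtain ⟨α, hα⟩ := hAne p hp
    obtain ⟨β, hβ⟩ := hAne q hq
    have hq3 : (XSi G u 1 q \ G.neighborFinset z).card ≤ 3 :=
      small_of_complete hℓ hF hpq (hcliq p) (hcliq q) (hbig p hp) (mem_sdiff.mp hα).1
        sdiff_subset (fun γ hγ => hcb α hα γ hγ)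
    have hp3 : (XSi G u 1 p \ G.neighborFinset z).card ≤ 3 :=
      small_of_complete hℓ hF hpq.symm (hcliq q) (hcliq p) (hbig q hq) (mem_sdiff.mp hβ).1
        sdiff_subset (fun γ hγ => (hcb γ hγ β hβ).symm)
    have e1 := Finset.card_sdiff_add_card_inter (XSi G u 1 p) (G.neighborFinset z)
    have e2 := Finset.card_sdiff_add_card_inter (XSi G u 1 q) (G.neighborFinset z)
    rw [hbig p hp] at e1
    rw [hbig q hq] at e2
    exact fan_at_center2 hF hu hcliq hpq (hall p hp) (hall q hq) (by omega)
  by_cases c01 : ∀ α ∈ XSi G u 1 0 \ G.neighborFinset z,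
      ∀ β ∈ XSi G u 1 1 \ G.neighborFinset z, G.Adj α β
  · exact hPcase 0 1 (by decide) (by decide) (by decide) c01
  by_cases c02 : ∀ α ∈ XSi G u 1 0 \ G.neighborFinset z,
      ∀ β ∈ XSi G u 1 2 \ G.neighborFinset z, G.Adj α β
  · exact hPcase 0 2 (by decide) (by decide) (by decide) c02
  by_cases c12 : ∀ α ∈ XSi G u 1 1 \ G.neighborFinset z,
      ∀ β ∈ XSi G u 1 2 \ G.neighborFinset z, G.Adj α β
  · exact hPcase 1 2 (by decide) (by decide) (by decide) c12
  push_neg at c01 c02 c12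
  have hcover : ∀ p q r : Fin 5, p ≤ 2 → q ≤ 2 → r ≤ 2 → p ≠ q → p ≠ r → q ≠ r →
      ∀ α ∈ XSi G u 1 p \ G.neighborFinset z, ∀ β ∈ XSi G u 1 q \ G.neighborFinset z,
      ¬ G.Adj α β → (XSi G u 1 r \ G.neighborFinset z).card ≤ 6 := by
    intro p q r hp hq hr hpq hpr hqr α hα β hβ hnadj
    obtain ⟨hαX, hαN⟩ := mem_sdiff.mp hα
    obtain ⟨hβX, hβN⟩ := mem_sdiff.mp hβ
    have hp34 := fin5_ne34 p hp
    have hq34 := fin5_ne34 q hq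
    have hr34 := fin5_ne34 r hr
    have hsub : (XSi G u 1 r \ G.neighborFinset z) ⊆
        (XSi G u 1 r ∩ G.neighborFinset α) ∪ (XSi G u 1 r ∩ G.neighborFinset β) := by
      intro γ hγ
      obtain ⟨hγX, hγN⟩ := mem_sdiff.mp hγ
      by_contra hout
      rw [mem_union] at hout
      push_neg at hout
      have haγ : ¬ G.Adj α γ :=
        fun h => hout.1 (mem_inter.mpr ⟨hγX, (G.mem_neighborFinset α γ).mpr h⟩)
      have hbγ : ¬ G.Adj β γ :=
        fun h => hout.2 (mem_inter.mpr ⟨hγX, (G.mem_neighborFinset β γ).mpr h⟩)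
      exact no_six h6 z α β γ (u 3) (u 4)
        (XS_ne hz (XSi_subset hαX) (by omega))
        (XS_ne hz (XSi_subset hβX) (by omega))
        (XS_ne hz (XSi_subset hγX) (by omega))
        (hvu 3) (hvu 4)
        (XSi1_ne hαX hβX hpq) (XSi1_ne hαX hγX hpr)
        (XS_ne_u (XSi_subset hαX) 3) (XS_ne_u (XSi_subset hαX) 4)
        (XSi1_ne hβX hγX hqr)
        (XS_ne_u (XSi_subset hβX) 3) (XS_ne_u (XSi_subset hβX) 4)
        (XS_ne_u (XSi_subset hγX) 3) (XS_ne_u (XSi_subset hγX) 4)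
        (fun e => (by decide : (3 : Fin 5) ≠ 4) (hu e))
        (fun h => hαN ((G.mem_neighborFinset z α).mpr h))
        (fun h => hβN ((G.mem_neighborFinset z β).mpr h))
        (fun h => hγN ((G.mem_neighborFinset z γ).mpr h))
        h3 h4 hnadj haγ
        (X1_not_adj hαX (Ne.symm hp34.1)) (X1_not_adj hαX (Ne.symm hp34.2))
        hbγ
        (X1_not_adj hβX (Ne.symm hq34.1)) (X1_not_adj hβX (Ne.symm hq34.2))
        (X1_not_adj hγX (Ne.symm hr34.1)) (X1_not_adj hγX (Ne.symm hr34.2))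
        (huI (Set.mem_range_self 3) (Set.mem_range_self 4)
          (fun e => (by decide : (3 : Fin 5) ≠ 4) (hu e)))
    have hα3 : (XSi G u 1 r ∩ G.neighborFinset α).card ≤ 3 :=
      small_of_complete hℓ hF hpr (hcliq p) (hcliq r) (hbig p hp) hαX inter_subset_left
        (fun γ hγ => (G.mem_neighborFinset α γ).mp (mem_inter.mp hγ).2)
    have hβ3 : (XSi G u 1 r ∩ G.neighborFinset β).card ≤ 3 :=
      small_of_complete hℓ hF hqr (hcliq q) (hcliq r) (hbig q hq) hβX inter_subset_left
        (fun γ hγ => (G.mem_neighborFinset β γ).mp (mem_inter.mp hγ).2)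
    calc (XSi G u 1 r \ G.neighborFinset z).card
        ≤ ((XSi G u 1 r ∩ G.neighborFinset α) ∪ (XSi G u 1 r ∩ G.neighborFinset β)).card :=
          card_le_card hsub
      _ ≤ _ := card_union_le _ _
      _ ≤ 6 := by omega
  obtain ⟨α0, hα0, β0, hβ0, hn0⟩ := c12
  obtain ⟨α1, hα1, β1, hβ1, hn1⟩ := c02
  obtain ⟨α2, hα2, β2, hβ2, hn2⟩ := c01
  have hA0 : (XSi G u 1 0 \ G.neighborFinset z).card ≤ 6 :=
    hcover 1 2 0 (by decide) (by decide) (by decide) (by decide) (by decide) (by decide)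
      α0 hα0 β0 hβ0 hn0
  have hA1 : (XSi G u 1 1 \ G.neighborFinset z).card ≤ 6 :=
    hcover 0 2 1 (by decide) (by decide) (by decide) (by decide) (by decide) (by decide)
      α1 hα1 β1 hβ1 hn1
  have hA2 : (XSi G u 1 2 \ G.neighborFinset z).card ≤ 6 :=
    hcover 0 1 2 (by decide) (by decide) (by decide) (by decide) (by decide) (by decide)
      α2 hα2 β2 hβ2 hn2
  have e0 := Finset.card_sdiff_add_card_inter (XSi G u 1 0) (G.neighborFinset z)
  have e1 := Finset.card_sdiff_add_card_inter (XSi G u 1 1) (G.neighborFinset z)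
  have e2 := Finset.card_sdiff_add_card_inter (XSi G u 1 2) (G.neighborFinset z)
  rw [hbig 0 (by decide)] at e0
  rw [hbig 1 (by decide)] at e1
  rw [hbig 2 (by decide)] at e2
  exact fan_at_center3 hF hu hcliq (by decide) (by decide) (by decide)
    (hall 0 (by decide)) (hall 1 (by decide)) (hall 2 (by decide)) (by omega)

end FanAux
end G


open Finset FanAux in
theorem X2_45 {V : Type} [Fintype V] [DecidableEq V] (ℓ : ℕ) (hℓ : 6 ≤ ℓ)
    (G : SimpleGraph V) [DecidableRel G.Adj]
    (hcard : Fintype.card V = 10 * ℓ + 1)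
    (hF : ¬ Contains (fan ℓ) G)
    (u : Fin 5 → V) (hu : Function.Injective u)
    (huI : (Set.range u).Pairwise fun a b => ¬ G.Adj a b)
    (h6 : ∀ s : Finset V, (↑s : Set V).Pairwise (fun a b => ¬ G.Adj a b) → s.card ≤ 5)
    (hΔ : ∀ v : V, G.degree v ≤ 2 * ℓ + 3)
    (hω : ∀ s : Finset V, G.IsClique (↑s : Set V) → s.card ≤ 2 * ℓ - 2)
    (hcliq : ∀ m : Fin 5, G.IsClique (↑(insert (u m) (XSi G u 1 m)) : Set V))
    (hord : ∀ i j : Fin 5, i ≤ j → (XSi G u 1 j).card ≤ (XSi G u 1 i).card)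
    (h13 : (XSi G u 1 2).card = 2 * ℓ - 3) :
    (XS G u 2).card + (XSi G u 2 3 ∩ XSi G u 2 4).card
        = (XSi G u 2 3).card + (XSi G u 2 4).card ∧
    (XSi G u 2 3 ∩ XSi G u 2 4).card ≤ 1 := by

  -- sizes of the three big X₁ₘ's
  have hbig : ∀ m : Fin 5, m ≤ 2 → (XSi G u 1 m).card = 2 * ℓ - 3 := by
    intro m hm
    have hup := hω _ (hcliq m)
    rw [card_insert_of_notMem (fun h => u_not_XS m (XSi_subset h))] at hup
    have hlo := hord m 2 hm
    rw [h13] at hlo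
    omega
  -- X₀ is empty
  have hX0 : XS G u 0 = ∅ := by
    rw [eq_empty_iff_forall_notMem]
    intro v hv
    have hfil := XS_card_filter hv
    rw [Finset.card_eq_zero] at hfil
    have hnadj : ∀ j, ¬ G.Adj v (u j) := by
      intro j hj
      have : j ∈ Finset.univ.filter fun j => G.Adj v (u j) := mem_filter.mpr ⟨mem_univ _, hj⟩
      rw [hfil] at this
      exact absurd this (notMem_empty _)
    have hne : ∀ i j : Fin 5, i ≠ j → u i ≠ u j := fun i j hij e => hij (hu e)
    have hadj : ∀ i j : Fin 5, i ≠ j → ¬ G.Adj (u i) (u j) :=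
      fun i j hij => huI (Set.mem_range_self i) (Set.mem_range_self j) (hne i j hij)
    exact no_six h6 (u 0) (u 1) (u 2) (u 3) (u 4) v
      (hne 0 1 (by decide)) (hne 0 2 (by decide)) (hne 0 3 (by decide)) (hne 0 4 (by decide))
      (Ne.symm (XS_ne_u hv 0))
      (hne 1 2 (by decide)) (hne 1 3 (by decide)) (hne 1 4 (by decide))
      (Ne.symm (XS_ne_u hv 1))
      (hne 2 3 (by decide)) (hne 2 4 (by decide)) (Ne.symm (XS_ne_u hv 2))
      (hne 3 4 (by decide)) (Ne.symm (XS_ne_u hv 3)) (Ne.symm (XS_ne_u hv 4))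
      (hadj 0 1 (by decide)) (hadj 0 2 (by decide)) (hadj 0 3 (by decide))
      (hadj 0 4 (by decide)) (fun h => hnadj 0 h.symm)
      (hadj 1 2 (by decide)) (hadj 1 3 (by decide)) (hadj 1 4 (by decide))
      (fun h => hnadj 1 h.symm)
      (hadj 2 3 (by decide)) (hadj 2 4 (by decide)) (fun h => hnadj 2 h.symm)
      (hadj 3 4 (by decide)) (fun h => hnadj 3 h.symm) (fun h => hnadj 4 h.symm)
  -- partition of V
  have hunion : Finset.image u Finset.univ ∪ (range 6).biUnion (fun s => XS G u s) =
      (Finset.univ : Finset V) := by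
    apply Finset.eq_univ_of_forall
    intro v
    rw [mem_union]
    by_cases hvI : v ∈ Finset.image u Finset.univ
    · exact Or.inl hvI
    · refine Or.inr (mem_biUnion.mpr ?_)
      have hne : ∀ j, v ≠ u j := fun j e => hvI (mem_image.mpr ⟨j, mem_univ j, e.symm⟩)
      refine ⟨(Finset.univ.filter fun j => G.Adj v (u j)).card, ?_, ?_⟩
      · rw [mem_range]
        have := Finset.card_filter_le (Finset.univ : Finset (Fin 5))
          (fun j => G.Adj v (u j))
        simp only [Finset.card_univ, Fintype.card_fin] at this
        omega
      · exact mem_XS_iff.mpr ⟨hne, rfl⟩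
  have hdisjUI : Disjoint (Finset.image u Finset.univ) ((range 6).biUnion fun s => XS G u s) := by
    rw [Finset.disjoint_left]
    intro a ha ha'
    obtain ⟨j, _, hj⟩ := mem_image.mp ha
    obtain ⟨s, _, hs⟩ := mem_biUnion.mp ha'
    exact XS_ne_u hs j (by rw [hj])
  have htotal : 10 * ℓ + 1 = 5 + ∑ s ∈ range 6, (XS G u s).card := by
    have h1 : (Finset.univ : Finset V).card = 10 * ℓ + 1 := by
      rw [Finset.card_univ, hcard]
    rw [← h1, ← hunion, card_union_of_disjoint hdisjUI,
      card_biUnion (fun s _ t _ hst => XS_disj hst),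
      Finset.card_image_of_injective _ hu]
    simp
  have hsum6 : ∑ s ∈ range 6, (XS G u s).card = (XS G u 0).card + (XS G u 1).card
      + (XS G u 2).card + (XS G u 3).card + (XS G u 4).card + (XS G u 5).card := by
    rw [Finset.sum_range_succ, Finset.sum_range_succ, Finset.sum_range_succ,
      Finset.sum_range_succ, Finset.sum_range_succ, Finset.sum_range_one]
  -- X₁ splits into the five XSi's
  have hX1eq : XS G u 1 = Finset.univ.biUnion (fun i : Fin 5 => XSi G u 1 i) := by
    apply Finset.Subset.antisymm
    · intro v hv
      obtain ⟨a, ha⟩ := Finset.card_eq_one.mp (XS_card_filter hv)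
      have hadj : G.Adj v (u a) := by
        have : a ∈ Finset.univ.filter fun j => G.Adj v (u j) := by rw [ha]; simp
        exact (mem_filter.mp this).2
      exact mem_biUnion.mpr ⟨a, mem_univ a, mem_XSi_iff.mpr ⟨hv, hadj⟩⟩
    · intro v hv
      obtain ⟨i, _, hi⟩ := mem_biUnion.mp hv
      exact XSi_subset hi
  have hX1card : (XS G u 1).card = (XSi G u 1 0).card + (XSi G u 1 1).card
      + (XSi G u 1 2).card + (XSi G u 1 3).card + (XSi G u 1 4).card := by
    rw [hX1eq, card_biUnion (fun i _ j _ hij => XSi1_disj hij), Fin.sum_univ_five]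
  -- degree bounds at u 3 and u 4
  have hdeg : ∀ i : Fin 5, ∑ s ∈ range 6, (XSi G u s i).card ≤ 2 * ℓ + 3 := by
    intro i
    have hsub : (range 6).biUnion (fun s => XSi G u s i) ⊆ G.neighborFinset (u i) := by
      intro a ha
      obtain ⟨s, _, hs⟩ := mem_biUnion.mp ha
      exact (G.mem_neighborFinset (u i) a).mpr (mem_XSi_iff.mp hs).2.symm
    have h1 : ((range 6).biUnion fun s => XSi G u s i).card = ∑ s ∈ range 6, (XSi G u s i).card :=
      card_biUnion (fun s _ t _ hst => Finset.disjoint_of_subset_left XSi_subset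
        (Finset.disjoint_of_subset_right XSi_subset (XS_disj hst)))
    rw [← h1]
    calc ((range 6).biUnion fun s => XSi G u s i).card ≤ (G.neighborFinset (u i)).card :=
          card_le_card hsub
      _ = G.degree (u i) := rfl
      _ ≤ 2 * ℓ + 3 := hΔ (u i)
  have hdeg3 := hdeg 3
  have hdeg4 := hdeg 4
  have hsum63 : ∑ s ∈ range 6, (XSi G u s 3).card = (XSi G u 0 3).card + (XSi G u 1 3).card
      + (XSi G u 2 3).card + (XSi G u 3 3).card + (XSi G u 4 3).card + (XSi G u 5 3).card := by
    rw [Finset.sum_range_succ, Finset.sum_range_succ, Finset.sum_range_succ,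
      Finset.sum_range_succ, Finset.sum_range_succ, Finset.sum_range_one]
  have hsum64 : ∑ s ∈ range 6, (XSi G u s 4).card = (XSi G u 0 4).card + (XSi G u 1 4).card
      + (XSi G u 2 4).card + (XSi G u 3 4).card + (XSi G u 4 4).card + (XSi G u 5 4).card := by
    rw [Finset.sum_range_succ, Finset.sum_range_succ, Finset.sum_range_succ,
      Finset.sum_range_succ, Finset.sum_range_succ, Finset.sum_range_one]
  rw [hsum63] at hdeg3
  rw [hsum64] at hdeg4
  -- the unions
  have hU2 : XSi G u 2 3 ∪ XSi G u 2 4 = XS G u 2 := by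
    apply Finset.Subset.antisymm (union_subset XSi_subset XSi_subset)
    intro v hv
    rcases lemA hℓ hF hu huI h6 hω hcliq hbig hv with h | h
    · exact mem_union_left _ (mem_XSi_iff.mpr ⟨hv, h⟩)
    · exact mem_union_right _ (mem_XSi_iff.mpr ⟨hv, h⟩)
  have hU3 : XSi G u 3 3 ∪ XSi G u 3 4 = XS G u 3 := by
    apply Finset.Subset.antisymm (union_subset XSi_subset XSi_subset)
    intro v hv
    rcases lemA3 hℓ hF hu huI h6 hω hcliq hbig hv with h | h
    · exact mem_union_left _ (mem_XSi_iff.mpr ⟨hv, h⟩)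
    · exact mem_union_right _ (mem_XSi_iff.mpr ⟨hv, h⟩)
  have hU4 : XSi G u 4 3 ∪ XSi G u 4 4 = XS G u 4 := by
    apply Finset.Subset.antisymm (union_subset XSi_subset XSi_subset)
    intro v hv
    rcases X45_adj (le_refl 4) hv with h | h
    · exact mem_union_left _ (mem_XSi_iff.mpr ⟨hv, h⟩)
    · exact mem_union_right _ (mem_XSi_iff.mpr ⟨hv, h⟩)
  have hU5 : XSi G u 5 3 ∪ XSi G u 5 4 = XS G u 5 := by
    apply Finset.Subset.antisymm (union_subset XSi_subset XSi_subset)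
    intro v hv
    rcases X45_adj (by omega) hv with h | h
    · exact mem_union_left _ (mem_XSi_iff.mpr ⟨hv, h⟩)
    · exact mem_union_right _ (mem_XSi_iff.mpr ⟨hv, h⟩)
  have hc2 : (XS G u 2).card + (XSi G u 2 3 ∩ XSi G u 2 4).card
      = (XSi G u 2 3).card + (XSi G u 2 4).card := by
    rw [← hU2]
    exact card_union_add_card_inter _ _
  have hc3 : (XS G u 3).card ≤ (XSi G u 3 3).card + (XSi G u 3 4).card := by
    rw [← hU3]; exact card_union_le _ _
  have hc4 : (XS G u 4).card ≤ (XSi G u 4 3).card + (XSi G u 4 4).card := by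
    rw [← hU4]; exact card_union_le _ _
  have hc5 : (XS G u 5).card ≤ (XSi G u 5 3).card + (XSi G u 5 4).card := by
    rw [← hU5]; exact card_union_le _ _
  refine ⟨hc2, ?_⟩
  have hb0 := hbig 0 (by decide)
  have hb1 := hbig 1 (by decide)
  have hb2 := hbig 2 (by decide)
  have hX0card : (XS G u 0).card = 0 := by rw [hX0]; rfl
  rw [hsum6] at htotal
  omega
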